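/- arXiv:2411.06149 — 2 statements merged into one kernel-verified Lean document; each statement's English description precedes it below -/
import Mathlib

section
/- Let C = a·(M+1)·(e^{aL}·(1 + aL) − 1)/4. For every m ∈ ℕ and every k ∈ ℕ with k ≤ 2^m, the sequence n ↦ X^{m+n}_{2^n·k} of Euler approximations at the dyadic point d = a·k/2^m converges to some real number x_d, and moreover |X^{m+n}_{2^n·k} − x_d| ≤ C/2^{m+n−1} for all n ∈ ℕ (so the convergence is uniform over all dyadic points). -/
/-!
Two Euler half-steps from `(t, y)` differ from one full step from `(t, x)` by at most
`(1 + hL) |y - x| + h²L(M + 1)/4`, so, as long as the iterates stay in the box where `f` is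
bounded and Lipschitz, the Euler polygons of steps `h` and `h/2` differ at a common grid point
`kh ≤ T` by at most `h(M + 1)(e^{TL} - 1)/4`. Along the dyadic refinements of a fixed grid point
these differences decay like `2^{-n}`, so the approximations form a Cauchy sequence whose
distance to its limit is at most twice its current increment.
-/

open Filter Topology Set

lemma abs_euler_two_half_steps_sub_le {U : Set (ℝ × ℝ)} {f : ℝ × ℝ → ℝ} {M L h t x y : ℝ}
    (hL : 0 ≤ L) (hh : 0 ≤ h)
    (hlip : ∀ u ∈ U, ∀ v ∈ U, |f u - f v| ≤ L * (|u.1 - v.1| + |u.2 - v.2|))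
    (hx : (t, x) ∈ U) (hy : (t, y) ∈ U) (hy' : (t + h / 2, y + h / 2 * f (t, y)) ∈ U)
    (hfy : |f (t, y)| ≤ M) :
    |y + h / 2 * f (t, y) + h / 2 * f (t + h / 2, y + h / 2 * f (t, y)) - (x + h * f (t, x))|
      ≤ (1 + h * L) * |y - x| + h ^ 2 * L * (M + 1) / 4 := by
  set y' := y + h / 2 * f (t, y)
  have hh2 : |h / 2| = h / 2 := abs_of_nonneg (by positivity)
  have hlip₁ : |f (t, y) - f (t, x)| ≤ L * |y - x| := by simpa using hlip _ hy _ hx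
  have hlip₂ : |f (t + h / 2, y') - f (t, x)| ≤ L * (h / 2 + |y' - x|) := by
    simpa [hh2] using hlip _ hy' _ hx
  have hy'x : |y' - x| ≤ |y - x| + h / 2 * M := by
    calc |y' - x| ≤ |y - x| + |h / 2 * f (t, y)| := by
          rw [add_sub_right_comm]; exact abs_add_le _ _
      _ ≤ |y - x| + h / 2 * M := by rw [abs_mul, hh2]; gcongr
  calc |y' + h / 2 * f (t + h / 2, y') - (x + h * f (t, x))|
      = |(y - x) + h / 2 * (f (t, y) - f (t, x)) + h / 2 * (f (t + h / 2, y') - f (t, x))| := by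
        congr 1; ring
    _ ≤ |y - x| + h / 2 * |f (t, y) - f (t, x)| + h / 2 * |f (t + h / 2, y') - f (t, x)| := by
        simpa only [abs_mul, hh2] using abs_add_three (y - x) (h / 2 * (f (t, y) - f (t, x)))
          (h / 2 * (f (t + h / 2, y') - f (t, x)))
    _ ≤ |y - x| + h / 2 * (L * |y - x|) + h / 2 * (L * (h / 2 + (|y - x| + h / 2 * M))) := by
        gcongr; exact hlip₂.trans (by gcongr)
    _ = (1 + h * L) * |y - x| + h ^ 2 * L * (M + 1) / 4 := by ring

noncomputable def eulerIterate (f : ℝ × ℝ → ℝ) (x₀ h : ℝ) : ℕ → ℝ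
  | 0 => x₀
  | k + 1 => eulerIterate f x₀ h k + h * f (k * h, eulerIterate f x₀ h k)

def eulerBox (T M x₀ : ℝ) : Set (ℝ × ℝ) := Icc 0 T ×ˢ Icc (x₀ - M * T) (x₀ + M * T)

section

variable {f : ℝ × ℝ → ℝ} {T M L x₀ h : ℝ}

lemma mem_eulerBox_of_abs_sub_le {t x : ℝ} (hM : 0 ≤ M) (ht : t ∈ Icc 0 T)
    (hx : |x - x₀| ≤ M * t) :
    (t, x) ∈ eulerBox T M x₀ := by
  have hxT := abs_le.mp (hx.trans (mul_le_mul_of_nonneg_left ht.2 hM))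
  exact ⟨ht, by constructor <;> linarith [hxT.1, hxT.2]⟩

lemma eulerIterate_mem_eulerBox (hM : 0 ≤ M) (hh : 0 ≤ h)
    (hbdd : ∀ u ∈ eulerBox T M x₀, |f u| ≤ M) :
    ∀ k : ℕ, k * h ≤ T →
      ((k : ℝ) * h, eulerIterate f x₀ h k) ∈ eulerBox T M x₀ := by
  suffices hdev : ∀ k : ℕ, k * h ≤ T → |eulerIterate f x₀ h k - x₀| ≤ M * (k * h) from
    fun k hk => mem_eulerBox_of_abs_sub_le hM ⟨by positivity, hk⟩ (hdev k hk)
  intro k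
  induction k with
  | zero => simp [eulerIterate]
  | succ k ih =>
    intro hk
    push_cast at hk
    have hkT : (k : ℝ) * h ≤ T := by linarith
    have hfk := hbdd _ (mem_eulerBox_of_abs_sub_le hM ⟨by positivity, hkT⟩ (ih hkT))
    calc |eulerIterate f x₀ h (k + 1) - x₀|
        ≤ |eulerIterate f x₀ h k - x₀| + h * |f (k * h, eulerIterate f x₀ h k)| := by
          rw [eulerIterate, add_sub_right_comm]
          exact (abs_add_le _ _).trans_eq (by rw [abs_mul, abs_of_nonneg hh])
      _ ≤ M * (k * h) + h * M := by gcongr; exact ih hkT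
      _ = M * ((k + 1 : ℕ) * h) := by push_cast; ring

lemma abs_eulerIterate_half_sub_le (hM : 0 ≤ M) (hL : 0 ≤ L) (hh : 0 ≤ h)
    (hlip : ∀ u ∈ eulerBox T M x₀, ∀ v ∈ eulerBox T M x₀,
      |f u - f v| ≤ L * (|u.1 - v.1| + |u.2 - v.2|))
    (hbdd : ∀ u ∈ eulerBox T M x₀, |f u| ≤ M) :
    ∀ k : ℕ, k * h ≤ T → |eulerIterate f x₀ (h / 2) (2 * k) - eulerIterate f x₀ h k|
      ≤ h * (M + 1) / 4 * ((1 + h * L) ^ k - 1) := by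
  intro k
  induction k with
  | zero => simp [eulerIterate]
  | succ k ih =>
    intro hk
    push_cast at hk
    have hkT : (k : ℝ) * h ≤ T := by linarith
    have hmem := eulerIterate_mem_eulerBox (h := h / 2) hM (by positivity) hbdd
    have hx := eulerIterate_mem_eulerBox hM hh hbdd k hkT
    have hy := hmem (2 * k) (by push_cast; linarith)
    have hy' := hmem (2 * k + 1) (by push_cast; linarith)
    have htime : ((2 * k : ℕ) : ℝ) * (h / 2) = k * h := by push_cast; ring
    have htime' : ((2 * k + 1 : ℕ) : ℝ) * (h / 2) = k * h + h / 2 := by push_cast; ring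
    rw [htime] at hy
    rw [htime', eulerIterate, htime] at hy'
    have hstep := abs_euler_two_half_steps_sub_le hL hh hlip hx hy hy' (hbdd _ hy)
    rw [show 2 * (k + 1) = 2 * k + 1 + 1 by ring, eulerIterate, eulerIterate, eulerIterate,
      htime', htime]
    calc _ ≤ _ := hstep
      _ ≤ (1 + h * L) * (h * (M + 1) / 4 * ((1 + h * L) ^ k - 1)) + h ^ 2 * L * (M + 1) / 4 := by
          gcongr; exact ih hkT
      _ = h * (M + 1) / 4 * ((1 + h * L) ^ (k + 1) - 1) := by ring

lemma abs_eulerIterate_half_sub_le_exp (hM : 0 ≤ M) (hL : 0 ≤ L) (hh : 0 ≤ h)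
    (hlip : ∀ u ∈ eulerBox T M x₀, ∀ v ∈ eulerBox T M x₀,
      |f u - f v| ≤ L * (|u.1 - v.1| + |u.2 - v.2|))
    (hbdd : ∀ u ∈ eulerBox T M x₀, |f u| ≤ M) {k : ℕ} (hk : k * h ≤ T) :
    |eulerIterate f x₀ (h / 2) (2 * k) - eulerIterate f x₀ h k|
      ≤ h * (M + 1) / 4 * (Real.exp (T * L) - 1) := by
  have hpow : (1 + h * L) ^ k ≤ Real.exp (T * L) :=
    calc (1 + h * L) ^ k ≤ Real.exp (h * L) ^ k := by
          gcongr; linarith [Real.add_one_le_exp (h * L)]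
      _ = Real.exp (k * h * L) := by rw [← Real.exp_nat_mul, mul_assoc]
      _ ≤ Real.exp (T * L) := by gcongr
  calc _ ≤ h * (M + 1) / 4 * ((1 + h * L) ^ k - 1) :=
        abs_eulerIterate_half_sub_le hM hL hh hlip hbdd k hk
    _ ≤ h * (M + 1) / 4 * (Real.exp (T * L) - 1) := by gcongr

lemma exists_tendsto_eulerIterate_dyadic (hM : 0 ≤ M) (hL : 0 ≤ L) (hh : 0 ≤ h)
    (hlip : ∀ u ∈ eulerBox T M x₀, ∀ v ∈ eulerBox T M x₀,
      |f u - f v| ≤ L * (|u.1 - v.1| + |u.2 - v.2|))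
    (hbdd : ∀ u ∈ eulerBox T M x₀, |f u| ≤ M) {k : ℕ} (hk : k * h ≤ T) :
    ∃ x, Tendsto (fun n ↦ eulerIterate f x₀ (h / 2 ^ n) (2 ^ n * k)) atTop (𝓝 x) ∧
      ∀ n : ℕ, |eulerIterate f x₀ (h / 2 ^ n) (2 ^ n * k) - x|
        ≤ h * (M + 1) * (Real.exp (T * L) - 1) / 2 / 2 ^ n := by
  set c := h * (M + 1) * (Real.exp (T * L) - 1) / 2
  have hstep : ∀ n : ℕ, dist (eulerIterate f x₀ (h / 2 ^ n) (2 ^ n * k))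
      (eulerIterate f x₀ (h / 2 ^ (n + 1)) (2 ^ (n + 1) * k)) ≤ c / 2 / 2 ^ n := by
    intro n
    have hkn : ((2 ^ n * k : ℕ) : ℝ) * (h / 2 ^ n) ≤ T := by
      rw [show ((2 ^ n * k : ℕ) : ℝ) * (h / 2 ^ n) = k * h by push_cast; field_simp]
      exact hk
    have hrefine := abs_eulerIterate_half_sub_le_exp hM hL (by positivity) hlip hbdd hkn
    rw [dist_comm, Real.dist_eq, pow_succ, ← div_div, pow_succ, mul_comm _ 2, mul_assoc]
    calc _ ≤ _ := hrefine
      _ = c / 2 / 2 ^ n := by ring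
  obtain ⟨x, hx⟩ := cauchySeq_tendsto_of_complete (cauchySeq_of_le_geometric_two hstep)
  exact ⟨x, hx, fun n ↦ (Real.dist_eq _ _).symm.trans_le
    (dist_le_of_le_geometric_two_of_tendsto hstep hx n)⟩

end

/-- With C = a·(M+1)·(e^{aL}·(1+aL) − 1)/4, for every m and k ≤ 2^m the
sequence n ↦ X^{m+n}_{2^n·k} converges to some x_d, with
|X^{m+n}_{2^n·k} − x_d| ≤ C/2^{m+n−1} for all n (uniform over dyadic points). -/
theorem euler_dyadic_convergence
    (a M L x₀ : ℝ) (ha : 0 < a) (hM : 0 < M) (hL : 0 < L)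
    (U : Set (ℝ × ℝ))
    (hU : U = Set.Icc (0 : ℝ) a ×ˢ Set.Icc (x₀ - M * a) (x₀ + M * a))
    (f : ℝ × ℝ → ℝ)
    (hf_lip : ∀ u ∈ U, ∀ v ∈ U, |f u - f v| ≤ L * (|u.1 - v.1| + |u.2 - v.2|))
    (hf_bdd : ∀ u ∈ U, |f u| ≤ M)
    (X : ℕ → ℕ → ℝ)
    (hX0 : ∀ m, X m 0 = x₀)
    (hXs : ∀ m k, X m (k + 1) = X m k + a / 2 ^ m * f (a * k / 2 ^ m, X m k))
    (C : ℝ) (hC : C = a * (M + 1) * (Real.exp (a * L) * (1 + a * L) - 1) / 4) :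
    ∀ m k : ℕ, k ≤ 2 ^ m →
      ∃ xd : ℝ, Tendsto (fun n : ℕ => X (m + n) (2 ^ n * k)) atTop (𝓝 xd) ∧
        ∀ n : ℕ, |X (m + n) (2 ^ n * k) - xd| ≤ C / (2 : ℝ) ^ ((m : ℤ) + (n : ℤ) - 1) := by
  subst hU
  have hX : ∀ m, X m = eulerIterate f x₀ (a / 2 ^ m) := by
    intro m; funext k
    induction k with
    | zero => exact hX0 m
    | succ k ih => rw [hXs, eulerIterate, ih, mul_div_assoc', mul_comm (k : ℝ) a]
  intro m k hk
  have hka : (k : ℝ) * (a / 2 ^ m) ≤ a := by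
    rw [mul_div_left_comm]
    exact mul_le_of_le_one_right ha.le ((div_le_one (by positivity)).mpr (mod_cast hk))
  obtain ⟨xd, hlim, hbound⟩ :=
    exists_tendsto_eulerIterate_dyadic (T := a) hM.le hL.le (by positivity) hf_lip hf_bdd hka
  simp only [hX, pow_add, ← div_div]
  refine ⟨xd, hlim, fun n ↦ (hbound n).trans ?_⟩
  have hC' : a * (M + 1) * (Real.exp (a * L) - 1) ≤ 4 * C :=
    calc a * (M + 1) * (Real.exp (a * L) - 1)
        ≤ a * (M + 1) * (Real.exp (a * L) * (1 + a * L) - 1) := by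
          gcongr
          exact le_mul_of_one_le_right (Real.exp_pos _).le (by nlinarith [mul_pos ha hL])
      _ = 4 * C := by rw [hC]; ring
  rw [zpow_sub₀ two_ne_zero, zpow_one, zpow_add₀ two_ne_zero, zpow_natCast, zpow_natCast]
  calc _ = a * (M + 1) * (Real.exp (a * L) - 1) / 2 / (2 ^ m * 2 ^ n) := by ring
    _ ≤ 4 * C / 2 / (2 ^ m * 2 ^ n) := by gcongr
    _ = _ := by field_simp; ring
end

section
/- Let t ∈ [0,a] and let (c_n) and (d_n) be sequences of dyadic points in D with c_n < d_n for all n, both converging to t. Then the difference quotients (x(c_n) − x(d_n))/(c_n − d_n) converge to f(t, x(t)) as n → ∞. -/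
/-! The Euler polygons stay in the rectangle `U`, where `f` is bounded by `M` and `L`-Lipschitz;
adding up the one-step errors gives the discrete Taylor estimate
`|X j - X k - (tⱼ - tₖ) f (tₖ, X k)| ≤ L (1 + M) (tⱼ - tₖ)²`. Refining the grid and passing to
the limit, the same estimate holds for `x` between any two dyadic points, so the difference
quotient of `x` on `[c, d]` is within `L (1 + M) (d - c)` of `f (c, x c)`, and the latter tends to
`f (t, x t)` by continuity. -/

open Filter Topology Set

def eulerRect (a M x₀ : ℝ) : Set (ℝ × ℝ) := Icc 0 a ×ˢ Icc (x₀ - M * a) (x₀ + M * a)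

lemma isClosed_eulerRect (a M x₀ : ℝ) : IsClosed (eulerRect a M x₀) :=
  isClosed_Icc.prod isClosed_Icc

lemma mk_mem_eulerRect {a M x₀ s y : ℝ} (hM : 0 ≤ M) (hs : s ∈ Icc 0 a)
    (hy : |y - x₀| ≤ M * s) : (s, y) ∈ eulerRect a M x₀ := by
  have hMs : M * s ≤ M * a := mul_le_mul_of_nonneg_left hs.2 hM
  rw [abs_le] at hy
  exact ⟨hs, by linarith, by linarith⟩

lemma continuousOn_of_abs_sub_le {s : Set (ℝ × ℝ)} {g : ℝ × ℝ → ℝ} {L : ℝ} (hL : 0 ≤ L)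
    (hg : ∀ u ∈ s, ∀ v ∈ s, |g u - g v| ≤ L * (|u.1 - v.1| + |u.2 - v.2|)) :
    ContinuousOn g s := by
  refine (LipschitzOnWith.of_dist_le_mul (K := ⟨2 * L, by positivity⟩)
    fun u hu v hv => ?_).continuousOn
  have h₁ : |u.1 - v.1| ≤ dist u v := by rw [Prod.dist_eq, ← Real.dist_eq]; exact le_max_left _ _
  have h₂ : |u.2 - v.2| ≤ dist u v := by rw [Prod.dist_eq, ← Real.dist_eq]; exact le_max_right _ _
  calc dist (g u) (g v) = |g u - g v| := Real.dist_eq _ _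
    _ ≤ L * (|u.1 - v.1| + |u.2 - v.2|) := hg u hu v hv
    _ ≤ 2 * L * dist u v := by nlinarith

section Euler

variable {a M L x₀ h : ℝ} {f : ℝ × ℝ → ℝ} {Y : ℕ → ℝ}

lemma abs_euler_sub_init_le (hM : 0 ≤ M) (hh : 0 ≤ h)
    (hf_bdd : ∀ u ∈ eulerRect a M x₀, |f u| ≤ M)
    (hY0 : Y 0 = x₀) (hY : ∀ k : ℕ, Y (k + 1) = Y k + h * f (h * k, Y k)) :
    ∀ k : ℕ, h * k ≤ a → |Y k - x₀| ≤ M * (h * k) := by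
  intro k
  induction k with
  | zero => simp [hY0]
  | succ k ih =>
    intro hk
    push_cast at hk ⊢
    have hk' : h * k ≤ a := by nlinarith
    have hmem := mk_mem_eulerRect hM ⟨by positivity, hk'⟩ (ih hk')
    calc |Y (k + 1) - x₀| = |(Y k - x₀) + h * f (h * k, Y k)| := by rw [hY]; ring_nf
      _ ≤ |Y k - x₀| + h * |f (h * k, Y k)| :=
        (abs_add_le _ _).trans_eq (by rw [abs_mul, abs_of_nonneg hh])
      _ ≤ M * (h * k) + h * M :=
        add_le_add (ih hk') (mul_le_mul_of_nonneg_left (hf_bdd _ hmem) hh)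
      _ = M * (h * (k + 1)) := by ring

lemma euler_mem_eulerRect (hM : 0 ≤ M) (hh : 0 ≤ h)
    (hf_bdd : ∀ u ∈ eulerRect a M x₀, |f u| ≤ M)
    (hY0 : Y 0 = x₀) (hY : ∀ k : ℕ, Y (k + 1) = Y k + h * f (h * k, Y k))
    {k : ℕ} (hk : h * k ≤ a) : (h * k, Y k) ∈ eulerRect a M x₀ :=
  mk_mem_eulerRect hM ⟨by positivity, hk⟩ (abs_euler_sub_init_le hM hh hf_bdd hY0 hY k hk)

lemma abs_euler_sub_euler_le (hM : 0 ≤ M) (hh : 0 ≤ h)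
    (hf_bdd : ∀ u ∈ eulerRect a M x₀, |f u| ≤ M)
    (hY0 : Y 0 = x₀) (hY : ∀ k : ℕ, Y (k + 1) = Y k + h * f (h * k, Y k))
    {k j : ℕ} (hkj : k ≤ j) (hj : h * j ≤ a) : |Y j - Y k| ≤ M * (h * j - h * k) := by
  induction j, hkj using Nat.le_induction with
  | base => simp
  | succ j hkj ih =>
    push_cast at hj ⊢
    have hj' : h * j ≤ a := by nlinarith
    have hfj := hf_bdd _ (euler_mem_eulerRect hM hh hf_bdd hY0 hY hj')
    calc |Y (j + 1) - Y k| = |(Y j - Y k) + h * f (h * j, Y j)| := by rw [hY]; ring_nf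
      _ ≤ |Y j - Y k| + h * |f (h * j, Y j)| :=
        (abs_add_le _ _).trans_eq (by rw [abs_mul, abs_of_nonneg hh])
      _ ≤ M * (h * j - h * k) + h * M :=
        add_le_add (ih hj') (mul_le_mul_of_nonneg_left hfj hh)
      _ = M * (h * (j + 1) - h * k) := by ring

lemma abs_euler_taylor_le (hM : 0 ≤ M) (hL : 0 ≤ L) (hh : 0 ≤ h)
    (hf_lip : ∀ u ∈ eulerRect a M x₀, ∀ v ∈ eulerRect a M x₀,
      |f u - f v| ≤ L * (|u.1 - v.1| + |u.2 - v.2|))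
    (hf_bdd : ∀ u ∈ eulerRect a M x₀, |f u| ≤ M)
    (hY0 : Y 0 = x₀) (hY : ∀ k : ℕ, Y (k + 1) = Y k + h * f (h * k, Y k))
    {k j : ℕ} (hkj : k ≤ j) (hj : h * j ≤ a) :
    |Y j - Y k - (h * j - h * k) * f (h * k, Y k)| ≤ L * (1 + M) * (h * j - h * k) ^ 2 := by
  induction j, hkj using Nat.le_induction with
  | base => simp
  | succ j hkj ih =>
    push_cast at hj ⊢
    have hj' : h * j ≤ a := by nlinarith
    have hkj' : h * k ≤ h * j := mul_le_mul_of_nonneg_left (Nat.cast_le.2 hkj) hh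
    have hk' : h * k ≤ a := hkj'.trans hj'
    have hdiff : |f (h * j, Y j) - f (h * k, Y k)| ≤ L * (1 + M) * (h * j - h * k) := by
      calc _ ≤ L * (|h * j - h * k| + |Y j - Y k|) :=
            hf_lip _ (euler_mem_eulerRect hM hh hf_bdd hY0 hY hj') _
              (euler_mem_eulerRect hM hh hf_bdd hY0 hY hk')
        _ ≤ L * ((h * j - h * k) + M * (h * j - h * k)) := by
            rw [abs_of_nonneg (sub_nonneg.2 hkj')]
            gcongr
            exact abs_euler_sub_euler_le hM hh hf_bdd hY0 hY hkj hj'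
        _ = L * (1 + M) * (h * j - h * k) := by ring
    calc |Y (j + 1) - Y k - (h * (j + 1) - h * k) * f (h * k, Y k)|
        = |(Y j - Y k - (h * j - h * k) * f (h * k, Y k))
            + h * (f (h * j, Y j) - f (h * k, Y k))| := by rw [hY]; ring_nf
      _ ≤ L * (1 + M) * (h * j - h * k) ^ 2 + h * (L * (1 + M) * (h * j - h * k)) := by
        refine (abs_add_le _ _).trans (add_le_add (ih hj') ?_)
        rw [abs_mul, abs_of_nonneg hh]
        exact mul_le_mul_of_nonneg_left hdiff hh
      _ ≤ L * (1 + M) * (h * (j + 1) - h * k) ^ 2 := by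
        have : 0 ≤ L * (1 + M) := by positivity
        nlinarith [mul_nonneg this (sq_nonneg h),
          mul_nonneg this (mul_nonneg hh (sub_nonneg.2 hkj'))]

end Euler

def dyadicPoints (a : ℝ) : Set ℝ := {r | ∃ m k : ℕ, k ≤ 2 ^ m ∧ r = a * k / 2 ^ m}

lemma two_pow_mul_le_two_pow_add {m k : ℕ} (hk : k ≤ 2 ^ m) (n : ℕ) : 2 ^ n * k ≤ 2 ^ (m + n) := by
  rw [pow_add, mul_comm (2 ^ m)]
  exact Nat.mul_le_mul_left _ hk

lemma mul_div_two_pow_refine (a : ℝ) (m n k : ℕ) :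
    a * ((2 ^ n * k : ℕ) : ℝ) / 2 ^ (m + n) = a * k / 2 ^ m := by
  push_cast
  rw [pow_add]
  field_simp

lemma mul_div_two_pow_mem_Icc {a : ℝ} (ha : 0 ≤ a) {m k : ℕ} (hk : k ≤ 2 ^ m) :
    a * k / 2 ^ m ∈ Icc 0 a := by
  have hk' : (k : ℝ) ≤ 2 ^ m := by exact_mod_cast hk
  refine ⟨by positivity, ?_⟩
  rw [div_le_iff₀ (by positivity)]
  exact mul_le_mul_of_nonneg_left hk' ha

lemma dyadicPoints_subset_Icc {a : ℝ} (ha : 0 ≤ a) : dyadicPoints a ⊆ Icc 0 a := by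
  rintro r ⟨m, k, hk, rfl⟩
  exact mul_div_two_pow_mem_Icc ha hk

lemma exists_common_two_pow {a p q : ℝ} (hp : p ∈ dyadicPoints a) (hq : q ∈ dyadicPoints a) :
    ∃ m k j : ℕ, k ≤ 2 ^ m ∧ j ≤ 2 ^ m ∧ p = a * k / 2 ^ m ∧ q = a * j / 2 ^ m := by
  obtain ⟨m₁, k₁, hk₁, rfl⟩ := hp
  obtain ⟨m₂, k₂, hk₂, rfl⟩ := hq
  refine ⟨m₁ + m₂, 2 ^ m₂ * k₁, 2 ^ m₁ * k₂, two_pow_mul_le_two_pow_add hk₁ m₂, ?_,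
    (mul_div_two_pow_refine a m₁ m₂ k₁).symm, ?_⟩
  · rw [add_comm]; exact two_pow_mul_le_two_pow_add hk₂ m₁
  · rw [add_comm, mul_div_two_pow_refine]

section Limit

variable {a M L x₀ : ℝ} {f : ℝ × ℝ → ℝ} {X : ℕ → ℕ → ℝ} {x : ℝ → ℝ}

lemma abs_dyadic_taylor_le (ha : 0 ≤ a) (hM : 0 ≤ M) (hL : 0 ≤ L)
    (hf_lip : ∀ u ∈ eulerRect a M x₀, ∀ v ∈ eulerRect a M x₀,
      |f u - f v| ≤ L * (|u.1 - v.1| + |u.2 - v.2|))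
    (hf_bdd : ∀ u ∈ eulerRect a M x₀, |f u| ≤ M)
    (hX0 : ∀ m, X m 0 = x₀)
    (hXs : ∀ m k, X m (k + 1) = X m k + a / 2 ^ m * f (a * k / 2 ^ m, X m k))
    (hx_dyadic : ∀ m k : ℕ, k ≤ 2 ^ m →
      Tendsto (fun n : ℕ => X (m + n) (2 ^ n * k)) atTop (𝓝 (x (a * k / 2 ^ m))))
    {m k j : ℕ} (hkj : k ≤ j) (hj : j ≤ 2 ^ m) :
    |x (a * j / 2 ^ m) - x (a * k / 2 ^ m)
        - (a * j / 2 ^ m - a * k / 2 ^ m) * f (a * k / 2 ^ m, x (a * k / 2 ^ m))|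
      ≤ L * (1 + M) * (a * j / 2 ^ m - a * k / 2 ^ m) ^ 2 := by
  have hk : k ≤ 2 ^ m := hkj.trans hj
  set p := a * k / 2 ^ m
  set q := a * j / 2 ^ m
  have hY : ∀ n i, X (m + n) (i + 1)
      = X (m + n) i + a / 2 ^ (m + n) * f (a / 2 ^ (m + n) * i, X (m + n) i) := by
    intro n i
    rw [hXs, mul_div_right_comm a]
  have hh : ∀ n, 0 ≤ a / 2 ^ (m + n) := fun n => by positivity
  have hgrid : ∀ n i, a / 2 ^ (m + n) * ((2 ^ n * i : ℕ) : ℝ) = a * i / 2 ^ m := fun n i => by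
    rw [div_mul_eq_mul_div, mul_div_two_pow_refine]
  have hmem : ∀ n, (p, X (m + n) (2 ^ n * k)) ∈ eulerRect a M x₀ := by
    intro n
    have := euler_mem_eulerRect hM (hh n) hf_bdd (hX0 _) (hY n)
      (k := 2 ^ n * k) (by rw [hgrid n k]; exact (mul_div_two_pow_mem_Icc ha hk).2)
    rwa [hgrid n k] at this
  have hbound : ∀ n, |X (m + n) (2 ^ n * j) - X (m + n) (2 ^ n * k)
      - (q - p) * f (p, X (m + n) (2 ^ n * k))| ≤ L * (1 + M) * (q - p) ^ 2 := by
    intro n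
    have := abs_euler_taylor_le hM hL (hh n) hf_lip hf_bdd (hX0 _) (hY n)
      (Nat.mul_le_mul_left (2 ^ n) hkj)
      (by rw [hgrid n j]; exact (mul_div_two_pow_mem_Icc ha hj).2)
    rwa [hgrid n j, hgrid n k] at this
  have hlim : Tendsto (fun n => (p, X (m + n) (2 ^ n * k))) atTop (𝓝 (p, x p)) :=
    tendsto_const_nhds.prodMk_nhds (hx_dyadic m k hk)
  have hxp : (p, x p) ∈ eulerRect a M x₀ :=
    (isClosed_eulerRect a M x₀).mem_of_tendsto hlim (.of_forall hmem)
  have hf_lim : Tendsto (fun n => f (p, X (m + n) (2 ^ n * k))) atTop (𝓝 (f (p, x p))) :=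
    ((continuousOn_of_abs_sub_le hL hf_lip) _ hxp).tendsto.comp
      (tendsto_nhdsWithin_iff.2 ⟨hlim, .of_forall hmem⟩)
  exact le_of_tendsto
    ((((hx_dyadic m j hj).sub (hx_dyadic m k hk)).sub (hf_lim.const_mul _)).abs)
    (.of_forall hbound)

end Limit

section Solution

variable {a M L x₀ : ℝ} {f : ℝ × ℝ → ℝ} {X : ℕ → ℕ → ℝ} {x : ℝ → ℝ}

lemma abs_slope_sub_le_of_mem_dyadicPoints (ha : 0 < a) (hM : 0 ≤ M) (hL : 0 ≤ L)
    (hf_lip : ∀ u ∈ eulerRect a M x₀, ∀ v ∈ eulerRect a M x₀,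
      |f u - f v| ≤ L * (|u.1 - v.1| + |u.2 - v.2|))
    (hf_bdd : ∀ u ∈ eulerRect a M x₀, |f u| ≤ M)
    (hX0 : ∀ m, X m 0 = x₀)
    (hXs : ∀ m k, X m (k + 1) = X m k + a / 2 ^ m * f (a * k / 2 ^ m, X m k))
    (hx_dyadic : ∀ m k : ℕ, k ≤ 2 ^ m →
      Tendsto (fun n : ℕ => X (m + n) (2 ^ n * k)) atTop (𝓝 (x (a * k / 2 ^ m))))
    {p q : ℝ} (hp : p ∈ dyadicPoints a) (hq : q ∈ dyadicPoints a) (hpq : p < q) :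
    |(x p - x q) / (p - q) - f (p, x p)| ≤ L * (1 + M) * (q - p) := by
  have hqp : 0 < q - p := sub_pos.2 hpq
  have htaylor : |x q - x p - (q - p) * f (p, x p)| ≤ L * (1 + M) * (q - p) ^ 2 := by
    obtain ⟨m, k, j, hk, hj, rfl, rfl⟩ := exists_common_two_pow hp hq
    have hkj : k ≤ j := by
      rw [div_lt_div_iff_of_pos_right (by positivity), mul_lt_mul_iff_right₀ ha] at hpq
      exact_mod_cast hpq.le
    exact abs_dyadic_taylor_le ha.le hM hL hf_lip hf_bdd hX0 hXs hx_dyadic hkj hj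
  have hquot : (x p - x q) / (p - q) - f (p, x p)
      = (x q - x p - (q - p) * f (p, x p)) / (q - p) := by
    field_simp [hqp.ne', (sub_neg.2 hpq).ne]
    ring
  rw [hquot, abs_div, abs_of_pos hqp, div_le_iff₀ hqp]
  exact htaylor.trans_eq (by ring)

lemma continuousOn_comp_graph (ha : 0 ≤ a) (hM : 0 ≤ M) (hL : 0 ≤ L)
    (hf_lip : ∀ u ∈ eulerRect a M x₀, ∀ v ∈ eulerRect a M x₀,
      |f u - f v| ≤ L * (|u.1 - v.1| + |u.2 - v.2|))
    (hx0 : x 0 = x₀)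
    (hx_lip : ∀ t ∈ Icc (0 : ℝ) a, ∀ s ∈ Icc (0 : ℝ) a, |x t - x s| ≤ M * |t - s|) :
    ContinuousOn (fun s => f (s, x s)) (Icc 0 a) := by
  have hx : ContinuousOn x (Icc 0 a) :=
    (LipschitzOnWith.of_dist_le_mul (K := ⟨M, hM⟩) fun t ht s hs => by
      rw [Real.dist_eq, Real.dist_eq]; exact hx_lip t ht s hs).continuousOn
  refine (continuousOn_of_abs_sub_le hL hf_lip).comp (continuousOn_id.prodMk hx) fun s hs => ?_
  exact mk_mem_eulerRect hM hs (by simpa [hx0, abs_of_nonneg hs.1] using hx_lip s hs 0 ⟨le_rfl, ha⟩)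

end Solution

/-- If (c_n), (d_n) are dyadic sequences with c_n < d_n both converging to
t ∈ [0,a], then (x(c_n) − x(d_n))/(c_n − d_n) → f(t, x(t)). -/
theorem difference_quotients_tendsto
    (a M L x₀ : ℝ) (ha : 0 < a) (hM : 0 < M) (hL : 0 < L)
    (U : Set (ℝ × ℝ))
    (hU : U = Set.Icc (0 : ℝ) a ×ˢ Set.Icc (x₀ - M * a) (x₀ + M * a))
    (f : ℝ × ℝ → ℝ)
    (hf_lip : ∀ u ∈ U, ∀ v ∈ U, |f u - f v| ≤ L * (|u.1 - v.1| + |u.2 - v.2|))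
    (hf_bdd : ∀ u ∈ U, |f u| ≤ M)
    (X : ℕ → ℕ → ℝ)
    (hX0 : ∀ m, X m 0 = x₀)
    (hXs : ∀ m k, X m (k + 1) = X m k + a / 2 ^ m * f (a * k / 2 ^ m, X m k))
    (D : Set ℝ) (hD : D = {r : ℝ | ∃ m k : ℕ, k ≤ 2 ^ m ∧ r = a * k / 2 ^ m})
    (x : ℝ → ℝ)
    (hx_dyadic : ∀ m k : ℕ, k ≤ 2 ^ m →
      Tendsto (fun n : ℕ => X (m + n) (2 ^ n * k)) atTop (𝓝 (x (a * k / 2 ^ m))))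
    (hx_lip : ∀ t ∈ Set.Icc (0 : ℝ) a, ∀ s ∈ Set.Icc (0 : ℝ) a, |x t - x s| ≤ M * |t - s|)
    (t : ℝ) (ht : t ∈ Set.Icc (0 : ℝ) a)
    (c d : ℕ → ℝ) (hc : ∀ n, c n ∈ D) (hd : ∀ n, d n ∈ D)
    (hcd : ∀ n, c n < d n)
    (hct : Tendsto c atTop (𝓝 t)) (hdt : Tendsto d atTop (𝓝 t)) :
    Tendsto (fun n => (x (c n) - x (d n)) / (c n - d n)) atTop (𝓝 (f (t, x t))) := by
  subst hU hD
  have hx0 : x 0 = x₀ := by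
    simpa [hX0, eq_comm] using hx_dyadic 0 0 (Nat.zero_le _)
  have hslope : Tendsto (fun n => (x (c n) - x (d n)) / (c n - d n) - f (c n, x (c n)))
      atTop (𝓝 0) :=
    squeeze_zero_norm
      (fun n => abs_slope_sub_le_of_mem_dyadicPoints ha hM.le hL.le hf_lip hf_bdd hX0 hXs
        hx_dyadic (hc n) (hd n) (hcd n))
      (by simpa using (hdt.sub hct).const_mul (L * (1 + M)))
  have hf_graph : Tendsto (fun n => f (c n, x (c n))) atTop (𝓝 (f (t, x t))) :=
    (continuousOn_comp_graph ha.le hM.le hL.le hf_lip hx0 hx_lip t ht).tendsto.comp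
      (tendsto_nhdsWithin_iff.2 ⟨hct, .of_forall fun n => dyadicPoints_subset_Icc ha.le (hc n)⟩)
  simpa using hslope.add hf_graph
end
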